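/- Soundness of static reduction: for a transition e = Edge(s, n̄, C) and a PEC c ∈ C, the reduced transition reduce(e, c), obtained by intersecting e at each path of c with n* = ⨅_{p ∈ c} e|p, has the same denotation as e: ⟦reduce(e, c)⟧ = ⟦e⟧. -/

import Mathlib

universe u
variable {S : Type u}

/-- Terms over a signature: a symbol applied to a list of child terms. -/
inductive Term (S : Type u) where
  | mk : S → List (Term S) → Term S

/-- The i-th child of a term, if it exists. -/
def Term.child : Term S → ℕ → Option (Term S)
  | .mk _ ts, i => ts[i]?

/-- Subterm of `t` at path `p` (partial). -/
def subAt : List ℕ → Term S → Option (Term S)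
  | [], t => some t
  | i :: p, t => (t.child i).bind (subAt p)

/-- A term satisfies a path equivalence class `c` if the subterms at
all paths of `c` exist and are equal. -/
def pecSat (c : Set (List ℕ)) (t : Term S) : Prop :=
  ∃ t', ∀ p ∈ c, subAt p t = some t'

/-- A term satisfies a path constraint set if it satisfies each member PEC. -/
def pcsSat (C : Set (Set (List ℕ))) (t : Term S) : Prop :=
  ∀ c ∈ C, pecSat c t

/-- A PCS is closed if whenever `p', p'' ∈ c₁ ∈ C` and `p'.p ∈ c₂ ∈ C`,
then also `p''.p ∈ c₂`. -/
def Closed (C : Set (Set (List ℕ))) : Prop :=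
  ∀ c₁ ∈ C, ∀ c₂ ∈ C, ∀ p' p'' p : List ℕ,
    p' ∈ c₁ → p'' ∈ c₁ → p' ++ p ∈ c₂ → p'' ++ p ∈ c₂

/-- A set of paths is prefix-free if no member is a proper prefix of another. -/
def PrefixFree (c : Set (List ℕ)) : Prop :=
  ∀ p ∈ c, ∀ q ∈ c, p <+: q → p = q

/-- Well-formed terms with respect to an arity function. -/
inductive WFT (ar : S → ℕ) : Term S → Prop where
  | mk {s : S} {ts : List (Term S)} :
      ts.length = ar s → (∀ t ∈ ts, WFT ar t) → WFT ar (Term.mk s ts)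

mutual
/-- An acyclic ECTA node (state): a finite list of transitions. -/
inductive Node (S : Type u) where
  | mk : List (Edge S) → Node S
/-- An ECTA transition: a symbol, child nodes, and a path constraint set,
or the empty transition `⊥`. -/
inductive Edge (S : Type u) where
  | mk : S → List (Node S) → Set (Set (List ℕ)) → Edge S
  | bot : Edge S
end

mutual
/-- Acceptance of a term by a node. -/
inductive AccN : Node S → Term S → Prop where
  | intro {es : List (Edge S)} {e : Edge S} {t : Term S} :
      e ∈ es → AccE e t → AccN (Node.mk es) t
/-- Acceptance of a term by a transition: the symbols match, each child term
is accepted by the corresponding child node, and the term satisfies the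
constraint set. -/
inductive AccE : Edge S → Term S → Prop where
  | intro {s : S} {ns : List (Node S)} {C : Set (Set (List ℕ))} {ts : List (Term S)} :
      ts.length = ns.length →
      (∀ i (h1 : i < ns.length) (h2 : i < ts.length), AccN (ns[i]'h1) (ts[i]'h2)) →
      pcsSat C (Term.mk s ts) →
      AccE (Edge.mk s ns C) (Term.mk s ts)
end

/-- Denotation of a node. -/
def denN (n : Node S) : Set (Term S) := {t | AccN n t}
/-- Denotation of a transition. -/
def denE (e : Edge S) : Set (Term S) := {t | AccE e t}

/-- Union of two nodes: merge their transitions. -/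
def Node.union : Node S → Node S → Node S
  | .mk es₁, .mk es₂ => .mk (es₁ ++ es₂)

/-- The empty node `⊥`. -/
def botN : Node S := Node.mk []

/-- Consistency of a PCS: some term satisfies it. -/
def Consistent (S : Type u) (C : Set (Set (List ℕ))) : Prop :=
  ∃ t : Term S, pcsSat C t

open Classical in
mutual
/-- Intersection of two nodes: pairwise intersection of their transitions. -/
noncomputable def interN : Node S → Node S → Node S
  | .mk es₁, .mk es₂ => .mk (interEdges es₁ es₂)
  termination_by n₁ n₂ => sizeOf n₁ + sizeOf n₂
noncomputable def interEdges : List (Edge S) → List (Edge S) → List (Edge S)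
  | [], _ => []
  | e :: es, es₂ => interEdgeList e es₂ ++ interEdges es es₂
  termination_by es₁ es₂ => sizeOf es₁ + sizeOf es₂
noncomputable def interEdgeList : Edge S → List (Edge S) → List (Edge S)
  | _, [] => []
  | e₁, e₂ :: es => interE e₁ e₂ :: interEdgeList e₁ es
  termination_by e es => sizeOf e + sizeOf es
/-- Intersection of two transitions: same symbol, pointwise child
intersection, union of constraint sets when consistent; `⊥` otherwise. -/
noncomputable def interE : Edge S → Edge S → Edge S
  | .bot, _ => .bot
  | .mk _ _ _, .bot => .bot
  | .mk s₁ ns₁ C₁, .mk s₂ ns₂ C₂ =>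
    if s₁ = s₂ ∧ ns₁.length = ns₂.length ∧ Consistent S (C₁ ∪ C₂)
    then .mk s₁ (interNodes ns₁ ns₂) (C₁ ∪ C₂)
    else .bot
  termination_by e₁ e₂ => sizeOf e₁ + sizeOf e₂
noncomputable def interNodes : List (Node S) → List (Node S) → List (Node S)
  | [], _ => []
  | _ :: _, [] => []
  | n₁ :: ns₁, n₂ :: ns₂ => interN n₁ n₂ :: interNodes ns₁ ns₂
  termination_by ns₁ ns₂ => sizeOf ns₁ + sizeOf ns₂
  decreasing_by all_goals (simp; omega)
end

mutual
/-- Nodes reachable from a node via a path. -/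
def nodesN : Node S → List ℕ → List (Node S)
  | n, [] => [n]
  | .mk es, j :: p => nodesL es (j :: p)
def nodesL : List (Edge S) → List ℕ → List (Node S)
  | [], _ => []
  | e :: es, p => nodesE e p ++ nodesL es p
/-- Nodes reachable from a transition via a (nonempty) path. -/
def nodesE : Edge S → List ℕ → List (Node S)
  | _, [] => []
  | .bot, _ => []
  | .mk _ ns _, j :: p => nodesNs ns j p
def nodesNs : List (Node S) → ℕ → List ℕ → List (Node S)
  | [], _, _ => []
  | n :: _, 0, p => nodesN n p
  | _ :: ns, j + 1, p => nodesNs ns j p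
end

/-- Union of a list of nodes. -/
def unionList (l : List (Node S)) : Node S := l.foldr Node.union botN

/-- Subautomaton of a node at a path: union of all reachable nodes. -/
def subN (n : Node S) (p : List ℕ) : Node S := unionList (nodesN n p)

/-- Subautomaton of a transition at a path. -/
def subE (e : Edge S) (p : List ℕ) : Node S := unionList (nodesE e p)

mutual
/-- Intersect a node with `n'` at path `p`: replace every node reachable
via `p` by its intersection with `n'`. -/
noncomputable def iapN : Node S → List ℕ → Node S → Node S
  | n, [], n' => interN n n'
  | .mk es, j :: p, n' => .mk (iapL es (j :: p) n')
noncomputable def iapL : List (Edge S) → List ℕ → Node S → List (Edge S)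
  | [], _, _ => []
  | e :: es, p, n' => iapE e p n' :: iapL es p n'
/-- Intersect a transition with `n'` at a path. -/
noncomputable def iapE : Edge S → List ℕ → Node S → Edge S
  | .bot, _, _ => .bot
  | e, [], _ => e
  | .mk s ns C, j :: p, n' =>
    if j < ns.length then .mk s (iapNs ns j p n') C else .bot
noncomputable def iapNs : List (Node S) → ℕ → List ℕ → Node S → List (Node S)
  | [], _, _, _ => []
  | n :: ns, 0, p, n' => iapN n p n' :: ns
  | n :: ns, j + 1, p, n' => n :: iapNs ns j p n'
end

/-- A list of paths is prefix-free: no element is a proper prefix of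
another. -/
def PrefixFreeL (c : List (List ℕ)) : Prop :=
  ∀ p ∈ c, ∀ q ∈ c, p <+: q → p = q

/-- `n* = ⨅_{p ∈ c} e|p`: the intersection of the subautomata of `e` at
every path of the PEC `c`. -/
noncomputable def nstar (e : Edge S) : List (List ℕ) → Node S
  | [] => botN
  | q :: qs => qs.foldl (fun acc r => interN acc (subE e r)) (subE e q)

/-- Static reduction of the PEC `c` at transition `e`: intersect `e` with
`n*` at every path of `c`. -/
noncomputable def reduceE (e : Edge S) (c : List (List ℕ)) : Edge S :=
  c.foldl (fun acc r => iapE acc r (nstar e c)) e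

section Aux
variable {S : Type u}

lemma accE_bot (t : Term S) : ¬ AccE (Edge.bot : Edge S) t := fun h => by cases h

lemma accN_bot (t : Term S) : ¬ AccN (botN : Node S) t := fun h => by
  cases h with | intro he _ => simp [botN] at he

lemma accN_union {n₁ n₂ : Node S} {t : Term S} :
    AccN (Node.union n₁ n₂) t ↔ AccN n₁ t ∨ AccN n₂ t := by
  obtain ⟨es₁⟩ := n₁; obtain ⟨es₂⟩ := n₂
  constructor
  · intro h
    cases h with
    | intro he ha =>
      rcases List.mem_append.1 he with h' | h'
      · exact Or.inl (AccN.intro h' ha)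
      · exact Or.inr (AccN.intro h' ha)
  · rintro (h | h) <;> cases h with
    | intro he ha =>
      exact AccN.intro (show _ ∈ es₁ ++ es₂ by simp [he]) ha

lemma accN_unionList {l : List (Node S)} {t : Term S} :
    AccN (unionList l) t ↔ ∃ n ∈ l, AccN n t := by
  induction l with
  | nil => simp [unionList]; exact accN_bot t
  | cons n l ih =>
    show AccN (Node.union n (unionList l)) t ↔ _
    rw [accN_union, ih]
    simp

lemma interEdgeList_mem {e' e : Edge S} {es : List (Edge S)} :
    e' ∈ interEdgeList e es ↔ ∃ e₂ ∈ es, e' = interE e e₂ := by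
  induction es with
  | nil => simp [interEdgeList]
  | cons e₂ es ih =>
    rw [interEdgeList]
    simp only [List.mem_cons, ih]
    constructor
    · rintro (rfl | ⟨a, ha, rfl⟩)
      · exact ⟨e₂, Or.inl rfl, rfl⟩
      · exact ⟨a, Or.inr ha, rfl⟩
    · rintro ⟨a, (rfl | ha), rfl⟩
      · exact Or.inl rfl
      · exact Or.inr ⟨a, ha, rfl⟩

lemma interEdges_mem {e' : Edge S} {es₁ es₂ : List (Edge S)} :
    e' ∈ interEdges es₁ es₂ ↔ ∃ e₁ ∈ es₁, ∃ e₂ ∈ es₂, e' = interE e₁ e₂ := by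
  induction es₁ with
  | nil => simp [interEdges]
  | cons e₁ es₁ ih =>
    rw [interEdges]
    simp only [List.mem_append, ih, interEdgeList_mem, List.mem_cons]
    constructor
    · rintro (⟨a, ha, rfl⟩ | ⟨a, ha, b, hb, rfl⟩)
      · exact ⟨e₁, Or.inl rfl, a, ha, rfl⟩
      · exact ⟨a, Or.inr ha, b, hb, rfl⟩
    · rintro ⟨a, (rfl | ha), b, hb, rfl⟩
      · exact Or.inl ⟨b, hb, rfl⟩
      · exact Or.inr ⟨a, ha, b, hb, rfl⟩

lemma interNodes_length : ∀ (ns₁ ns₂ : List (Node S)),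
    (interNodes ns₁ ns₂).length = min ns₁.length ns₂.length
  | [], _ => by rw [interNodes]; simp
  | _ :: _, [] => by rw [interNodes]; simp
  | n₁ :: ns₁, n₂ :: ns₂ => by
    rw [interNodes]; simp [interNodes_length ns₁ ns₂]

lemma interNodes_get : ∀ (ns₁ ns₂ : List (Node S)) (i : ℕ) (h1 : i < ns₁.length)
    (h2 : i < ns₂.length) (h : i < (interNodes ns₁ ns₂).length),
    (interNodes ns₁ ns₂)[i]'h = interN (ns₁[i]'h1) (ns₂[i]'h2)
  | [], _, i, h1, _, _ => absurd h1 (by simp)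
  | _ :: _, [], i, _, h2, _ => absurd h2 (by simp)
  | n₁ :: ns₁, n₂ :: ns₂, 0, _, _, h => by
    have : interNodes (n₁ :: ns₁) (n₂ :: ns₂) = interN n₁ n₂ :: interNodes ns₁ ns₂ := by
      rw [interNodes]
    simp [this]
  | n₁ :: ns₁, n₂ :: ns₂, i + 1, h1, h2, h => by
    have heq : interNodes (n₁ :: ns₁) (n₂ :: ns₂) = interN n₁ n₂ :: interNodes ns₁ ns₂ := by
      rw [interNodes]
    have h1' : i < ns₁.length := by simpa using h1
    have h2' : i < ns₂.length := by simpa using h2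
    have h' : i < (interNodes ns₁ ns₂).length := by rw [interNodes_length]; omega
    simp only [heq, List.getElem_cons_succ]
    exact interNodes_get ns₁ ns₂ i h1' h2' h'

lemma sizeOf_getElem_lt {ts : List (Term S)} {i : ℕ} (h : i < ts.length) (s : S) :
    sizeOf (ts[i]'h) < sizeOf (Term.mk s ts) := by
  have := List.sizeOf_lt_of_mem (List.getElem_mem h)
  simp only [Term.mk.sizeOf_spec]
  omega

theorem interN_sound_aux : ∀ (N : ℕ) (t : Term S), sizeOf t < N →
    ∀ n₁ n₂ : Node S, AccN (interN n₁ n₂) t → AccN n₁ t ∧ AccN n₂ t := by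
  intro N
  induction N with
  | zero => intro t h; omega
  | succ N ih =>
    intro t ht n₁ n₂ h
    obtain ⟨es₁⟩ := n₁; obtain ⟨es₂⟩ := n₂
    rw [interN] at h
    cases h with
    | intro he ha =>
      rw [interEdges_mem] at he
      obtain ⟨e₁, h₁, e₂, h₂, rfl⟩ := he
      match e₁, e₂ with
      | .bot, _ => rw [interE] at ha; exact absurd ha (accE_bot t)
      | .mk s₁ ns₁ C₁, .bot => rw [interE] at ha; exact absurd ha (accE_bot t)
      | .mk s₁ ns₁ C₁, .mk s₂ ns₂ C₂ =>
        rw [interE] at ha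
        split at ha
        case isFalse => exact absurd ha (accE_bot t)
        case isTrue hcond =>
          obtain ⟨hs, hlen, -⟩ := hcond
          subst hs
          cases ha with
          | @intro _ _ _ ts hl hch hpcs =>
            have hlts1 : ts.length = ns₁.length := by
              rw [hl, interNodes_length]; omega
            have hlts2 : ts.length = ns₂.length := by omega
            have hchild : ∀ i (hi1 : i < ns₁.length) (hi2 : i < ns₂.length)
                (hit : i < ts.length),
                AccN (ns₁[i]'hi1) (ts[i]'hit) ∧ AccN (ns₂[i]'hi2) (ts[i]'hit) := by
              intro i hi1 hi2 hit
              have hii : i < (interNodes ns₁ ns₂).length := by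
                rw [interNodes_length]; omega
              have hc := hch i hii hit
              rw [interNodes_get ns₁ ns₂ i hi1 hi2] at hc
              exact ih (ts[i]'hit) (by have := sizeOf_getElem_lt hit s₁; omega) _ _ hc
            constructor
            · exact AccN.intro h₁ (AccE.intro hlts1
                (fun i hi1 hit => (hchild i hi1 (by omega) hit).1)
                (fun c hc => hpcs c (Set.mem_union_left _ hc)))
            · exact AccN.intro h₂ (AccE.intro hlts2
                (fun i hi2 hit => (hchild i (by omega) hi2 hit).2)
                (fun c hc => hpcs c (Set.mem_union_right _ hc)))

theorem interN_sound {t : Term S} {n₁ n₂ : Node S} (h : AccN (interN n₁ n₂) t) :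
    AccN n₁ t ∧ AccN n₂ t :=
  interN_sound_aux (sizeOf t + 1) t (by omega) n₁ n₂ h

theorem interN_complete_aux : ∀ (N : ℕ) (t : Term S), sizeOf t < N →
    ∀ n₁ n₂ : Node S, AccN n₁ t → AccN n₂ t → AccN (interN n₁ n₂) t := by
  intro N
  induction N with
  | zero => intro t h; omega
  | succ N ih =>
    intro t ht n₁ n₂ h₁ h₂
    obtain ⟨es₁⟩ := n₁; obtain ⟨es₂⟩ := n₂
    cases h₁ with
    | @intro _ e₁ _ he₁ ha₁ =>
      cases h₂ with
      | @intro _ e₂ _ he₂ ha₂ =>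
        cases ha₁ with
        | @intro s ns₁ C₁ ts hl₁ hch₁ hpcs₁ =>
          cases ha₂ with
          | @intro _ ns₂ C₂ _ hl₂ hch₂ hpcs₂ =>
            have hpcsU : pcsSat (C₁ ∪ C₂) (Term.mk s ts) := by
              intro c hc
              rcases hc with hc | hc
              · exact hpcs₁ c hc
              · exact hpcs₂ c hc
            have hcond : s = s ∧ ns₁.length = ns₂.length ∧ Consistent S (C₁ ∪ C₂) :=
              ⟨rfl, by omega, ⟨Term.mk s ts, hpcsU⟩⟩
            have hEeq : interE (Edge.mk s ns₁ C₁) (Edge.mk s ns₂ C₂) =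
                Edge.mk s (interNodes ns₁ ns₂) (C₁ ∪ C₂) := by
              rw [interE, if_pos hcond]
            rw [interN]
            refine AccN.intro (show _ ∈ interEdges es₁ es₂ from
              interEdges_mem.2 ⟨_, he₁, _, he₂, rfl⟩) ?_
            rw [hEeq]
            refine AccE.intro (by rw [interNodes_length]; omega) ?_ hpcsU
            intro i hii hit
            have hi1 : i < ns₁.length := by
              rw [interNodes_length] at hii; omega
            have hi2 : i < ns₂.length := by
              rw [interNodes_length] at hii; omega
            rw [interNodes_get ns₁ ns₂ i hi1 hi2]
            exact ih (ts[i]'hit) (by have := sizeOf_getElem_lt hit s; omega) _ _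
              (hch₁ i hi1 hit) (hch₂ i hi2 hit)

theorem interN_complete {t : Term S} {n₁ n₂ : Node S} (h₁ : AccN n₁ t) (h₂ : AccN n₂ t) :
    AccN (interN n₁ n₂) t :=
  interN_complete_aux (sizeOf t + 1) t (by omega) n₁ n₂ h₁ h₂

end Aux
section Aux2
variable {S : Type u}

lemma nodesNs_eq : ∀ (ns : List (Node S)) (j : ℕ) (p : List ℕ) (h : j < ns.length),
    nodesNs ns j p = nodesN (ns[j]'h) p
  | n :: ns, 0, p, _ => rfl
  | n :: ns, j + 1, p, h => by
    simp only [List.getElem_cons_succ]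
    exact nodesNs_eq ns j p (by simpa using h)

lemma nodesL_mem {e : Edge S} {m : Node S} {p : List ℕ} :
    ∀ {es : List (Edge S)}, e ∈ es → m ∈ nodesE e p → m ∈ nodesL es p := by
  intro es
  induction es with
  | nil => simp
  | cons e' es ih =>
    intro he hm
    rcases List.mem_cons.1 he with rfl | he
    · simp [nodesL, hm]
    · simp [nodesL, ih he hm]

lemma subAt_cons {s : S} {ts : List (Term S)} {j : ℕ} {p : List ℕ} :
    subAt (j :: p) (Term.mk s ts) = ts[j]?.bind (subAt p) := by
  simp [subAt, Term.child]

theorem sub_over : ∀ (p : List ℕ) (t t' : Term S) (n : Node S),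
    AccN n t → subAt p t = some t' → ∃ m ∈ nodesN n p, AccN m t' := by
  intro p
  induction p with
  | nil =>
    intro t t' n h hs
    simp only [subAt, Option.some.injEq] at hs
    subst hs
    exact ⟨n, by simp [nodesN], h⟩
  | cons j p ih =>
    intro t t' n h hs
    obtain ⟨es⟩ := n
    cases h with
    | @intro _ e _ he ha =>
      cases ha with
      | @intro s nss C ts hl hch hpcs =>
        rw [subAt_cons] at hs
        obtain ⟨tj, htj, hsub⟩ := Option.bind_eq_some_iff.mp hs
        obtain ⟨hj, htj'⟩ := List.getElem?_eq_some_iff.mp htj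
        have hjn : j < nss.length := by omega
        have hacc : AccN (nss[j]'hjn) tj := htj' ▸ hch j hjn hj
        obtain ⟨m, hm, hmacc⟩ := ih tj t' _ hacc hsub
        refine ⟨m, ?_, hmacc⟩
        show m ∈ nodesL es (j :: p)
        apply nodesL_mem he
        show m ∈ nodesNs nss j p
        rw [nodesNs_eq nss j p hjn]
        exact hm

lemma subE_accept {e : Edge S} {t t' : Term S} {p : List ℕ} (hp : p ≠ [])
    (h : AccE e t) (hs : subAt p t = some t') : AccN (subE e p) t' := by
  match p, hp with
  | j :: p, _ =>
    match e, h with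
    | .mk s nss C, h =>
      cases h with
      | @intro _ _ _ ts hl hch hpcs =>
        rw [subAt_cons] at hs
        obtain ⟨tj, htj, hsub⟩ := Option.bind_eq_some_iff.mp hs
        obtain ⟨hj, htj'⟩ := List.getElem?_eq_some_iff.mp htj
        have hjn : j < nss.length := by omega
        have hacc : AccN (nss[j]'hjn) tj := htj' ▸ hch j hjn hj
        obtain ⟨m, hm, hmacc⟩ := sub_over p tj t' _ hacc hsub
        refine accN_unionList.2 ⟨m, ?_, hmacc⟩
        show m ∈ nodesNs nss j p
        rw [nodesNs_eq nss j p hjn]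
        exact hm

lemma iapL_eq_map : ∀ (es : List (Edge S)) (p : List ℕ) (n' : Node S),
    iapL es p n' = es.map (fun e => iapE e p n')
  | [], _, _ => by rw [iapL]; simp
  | e :: es, p, n' => by rw [iapL]; simp [iapL_eq_map es p n']

lemma iapNs_length : ∀ (ns : List (Node S)) (j : ℕ) (p : List ℕ) (n' : Node S),
    (iapNs ns j p n').length = ns.length
  | [], _, _, _ => by rw [iapNs]
  | n :: ns, 0, p, n' => by rw [iapNs]; simp
  | n :: ns, j + 1, p, n' => by rw [iapNs]; simp [iapNs_length ns j p n']

lemma iapNs_get : ∀ (ns : List (Node S)) (j : ℕ) (p : List ℕ) (n' : Node S) (i : ℕ)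
    (h1 : i < ns.length) (h : i < (iapNs ns j p n').length),
    (iapNs ns j p n')[i]'h = if i = j then iapN (ns[i]'h1) p n' else ns[i]'h1
  | [], _, _, _, i, h1, _ => absurd h1 (by simp)
  | n :: ns, 0, p, n', 0, _, _ => by
    have heq : iapNs (n :: ns) 0 p n' = iapN n p n' :: ns := by rw [iapNs]
    simp [heq]
  | n :: ns, 0, p, n', i + 1, h1, h => by
    have heq : iapNs (n :: ns) 0 p n' = iapN n p n' :: ns := by rw [iapNs]
    simp [heq]
  | n :: ns, j + 1, p, n', 0, _, _ => by
    have heq : iapNs (n :: ns) (j+1) p n' = n :: iapNs ns j p n' := by rw [iapNs]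
    simp [heq]
  | n :: ns, j + 1, p, n', i + 1, h1, h => by
    have heq : iapNs (n :: ns) (j+1) p n' = n :: iapNs ns j p n' := by rw [iapNs]
    have h1' : i < ns.length := by simpa using h1
    have h' : i < (iapNs ns j p n').length := by rw [iapNs_length]; omega
    simp only [heq, List.getElem_cons_succ]
    rw [iapNs_get ns j p n' i h1' h']
    simp [Nat.succ_inj]

lemma iapE_nil (e : Edge S) (n' : Node S) : iapE e [] n' = e := by
  match e with
  | .bot => rw [iapE]
  | .mk s ns C => rw [iapE]; simp

theorem iapN_sound : ∀ (p : List ℕ) (t : Term S) (n n' : Node S),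
    AccN (iapN n p n') t → AccN n t := by
  intro p
  induction p with
  | nil =>
    intro t n n' h
    rw [iapN] at h
    exact (interN_sound h).1
  | cons j p ih =>
    intro t n n' h
    obtain ⟨es⟩ := n
    rw [iapN] at h
    cases h with
    | intro he ha =>
      rw [iapL_eq_map] at he
      obtain ⟨e, hees, rfl⟩ := List.mem_map.1 he
      refine AccN.intro hees ?_
      match e with
      | .bot => rw [iapE] at ha; exact absurd ha (accE_bot t)
      | .mk s nss C =>
        rw [iapE] at ha
        split at ha
        case isFalse => exact absurd ha (accE_bot t)
        case isTrue hj =>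
          cases ha with
          | @intro _ _ _ ts hl hch hpcs =>
            rw [iapNs_length] at hl
            refine AccE.intro hl ?_ hpcs
            intro i hi1 hit
            have hii : i < (iapNs nss j p n').length := by rw [iapNs_length]; omega
            have hc := hch i hii hit
            rw [iapNs_get nss j p n' i hi1 hii] at hc
            by_cases hij : i = j
            · rw [if_pos hij] at hc; exact ih _ _ _ hc
            · rwa [if_neg hij] at hc

theorem iapE_sound : ∀ (p : List ℕ) (t : Term S) (e : Edge S) (n' : Node S),
    AccE (iapE e p n') t → AccE e t := by
  intro p t e n' h
  match p with
  | [] => rwa [iapE_nil] at h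
  | j :: p =>
    match e with
    | .bot => rw [iapE] at h; exact absurd h (accE_bot t)
    | .mk s nss C =>
      rw [iapE] at h
      split at h
      case isFalse => exact absurd h (accE_bot t)
      case isTrue hj =>
        cases h with
        | @intro _ _ _ ts hl hch hpcs =>
          rw [iapNs_length] at hl
          refine AccE.intro hl ?_ hpcs
          intro i hi1 hit
          have hii : i < (iapNs nss j p n').length := by rw [iapNs_length]; omega
          have hc := hch i hii hit
          rw [iapNs_get nss j p n' i hi1 hii] at hc
          by_cases hij : i = j
          · rw [if_pos hij] at hc; exact iapN_sound _ _ _ _ hc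
          · rwa [if_neg hij] at hc

theorem iapN_complete : ∀ (p : List ℕ) (t t' : Term S) (n n' : Node S),
    AccN n t → subAt p t = some t' → AccN n' t' → AccN (iapN n p n') t := by
  intro p
  induction p with
  | nil =>
    intro t t' n n' h hs h'
    simp only [subAt, Option.some.injEq] at hs
    subst hs
    rw [iapN]
    exact interN_complete h h'
  | cons j p ih =>
    intro t t' n n' h hs h'
    obtain ⟨es⟩ := n
    cases h with
    | @intro _ e _ he ha =>
      rw [iapN]
      refine AccN.intro (show iapE e (j :: p) n' ∈ iapL es (j :: p) n' from by
        rw [iapL_eq_map]; exact List.mem_map.2 ⟨e, he, rfl⟩) ?_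
      match e, ha with
      | .mk s nss C, ha =>
        cases ha with
        | @intro _ _ _ ts hl hch hpcs =>
          rw [subAt_cons] at hs
          obtain ⟨tj, htj, hsub⟩ := Option.bind_eq_some_iff.mp hs
          obtain ⟨hj, htj'⟩ := List.getElem?_eq_some_iff.mp htj
          have hjn : j < nss.length := by omega
          rw [iapE, if_pos hjn]
          refine AccE.intro (by rw [iapNs_length]; exact hl) ?_ hpcs
          intro i hii hit
          have hi : i < nss.length := by rw [iapNs_length] at hii; exact hii
          rw [iapNs_get nss j p n' i hi]
          by_cases hij : i = j
          · rw [if_pos hij]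
            subst hij
            have hacc : AccN (nss[i]'hi) tj := by rw [← htj']; exact hch i hi hit
            have hts : ts[i]'hit = tj := htj'
            rw [hts]
            exact ih tj t' _ n' hacc hsub h'
          · rw [if_neg hij]
            exact hch i hi hit

theorem iapE_complete : ∀ (p : List ℕ) (t t' : Term S) (e : Edge S) (n' : Node S),
    AccE e t → subAt p t = some t' → AccN n' t' → AccE (iapE e p n') t := by
  intro p t t' e n' h hs h'
  match p with
  | [] => rwa [iapE_nil]
  | j :: p =>
    match e, h with
    | .mk s nss C, h =>
      cases h with
      | @intro _ _ _ ts hl hch hpcs =>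
        rw [subAt_cons] at hs
        obtain ⟨tj, htj, hsub⟩ := Option.bind_eq_some_iff.mp hs
        obtain ⟨hj, htj'⟩ := List.getElem?_eq_some_iff.mp htj
        have hjn : j < nss.length := by omega
        rw [iapE, if_pos hjn]
        refine AccE.intro (by rw [iapNs_length]; exact hl) ?_ hpcs
        intro i hii hit
        have hi : i < nss.length := by rw [iapNs_length] at hii; exact hii
        rw [iapNs_get nss j p n' i hi]
        by_cases hij : i = j
        · rw [if_pos hij]
          subst hij
          have hacc : AccN (nss[i]'hi) tj := by rw [← htj']; exact hch i hi hit
          have hts : ts[i]'hit = tj := htj'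
          rw [hts]
          exact iapN_complete p tj t' _ n' hacc hsub h'
        · rw [if_neg hij]
          exact hch i hi hit

lemma foldl_inter_accept {e : Edge S} {t' : Term S} :
    ∀ (qs : List (List ℕ)) (acc : Node S), AccN acc t' →
      (∀ r ∈ qs, AccN (subE e r) t') →
      AccN (qs.foldl (fun acc r => interN acc (subE e r)) acc) t' := by
  intro qs
  induction qs with
  | nil => intro acc h _; simpa using h
  | cons r qs ih =>
    intro acc h hqs
    simp only [List.foldl_cons]
    exact ih _ (interN_complete h (hqs r (by simp))) (fun r' hr' => hqs r' (by simp [hr']))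

lemma nstar_accept {e : Edge S} {t' : Term S} {c : List (List ℕ)} (hne : c ≠ [])
    (h : ∀ p ∈ c, AccN (subE e p) t') : AccN (nstar e c) t' := by
  match c, hne with
  | q :: qs, _ =>
    rw [nstar]
    exact foldl_inter_accept qs _ (h q (by simp)) (fun r hr => h r (by simp [hr]))

lemma foldl_iap_sound {t : Term S} {n' : Node S} :
    ∀ (l : List (List ℕ)) (e : Edge S),
      AccE (l.foldl (fun acc r => iapE acc r n') e) t → AccE e t := by
  intro l
  induction l with
  | nil => intro e h; simpa using h
  | cons r l ih =>
    intro e h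
    simp only [List.foldl_cons] at h
    exact iapE_sound r t e n' (ih _ h)

lemma foldl_iap_complete {t t' : Term S} {n' : Node S} :
    ∀ (l : List (List ℕ)) (e : Edge S),
      AccE e t → (∀ r ∈ l, subAt r t = some t') → AccN n' t' →
      AccE (l.foldl (fun acc r => iapE acc r n') e) t := by
  intro l
  induction l with
  | nil => intro e h _ _; simpa using h
  | cons r l ih =>
    intro e h hl h'
    simp only [List.foldl_cons]
    exact ih _ (iapE_complete r t t' e n' h (hl r (by simp)) h')
      (fun r' hr' => hl r' (by simp [hr'])) h'

lemma foldl_iap_nil {n' : Node S} :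
    ∀ (l : List (List ℕ)) (e : Edge S), (∀ r ∈ l, r = ([] : List ℕ)) →
      l.foldl (fun acc r => iapE acc r n') e = e := by
  intro l
  induction l with
  | nil => intro e _; simp
  | cons r l ih =>
    intro e hl
    simp only [List.foldl_cons]
    rw [hl r (by simp), iapE_nil]
    exact ih _ (fun r' hr' => hl r' (by simp [hr']))

end Aux2

/-- Soundness of static reduction: reducing a PEC `c` of the constraint set
of a transition `e` does not change the denotation of `e`. -/
theorem reduce_sound (s : S) (ns : List (Node S)) (C : Set (Set (List ℕ)))
    (c : List (List ℕ)) (hne : c ≠ []) (hpf : PrefixFreeL c)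
    (hmem : {p | p ∈ c} ∈ C) :
    denE (reduceE (Edge.mk s ns C) c) = denE (Edge.mk s ns C) := by
  ext t
  simp only [denE, Set.mem_setOf_eq]
  constructor
  · intro h
    rw [reduceE] at h
    exact foldl_iap_sound c _ h
  · intro h
    rw [reduceE]
    by_cases hnil : ([] : List ℕ) ∈ c
    · rw [foldl_iap_nil c _ (fun r hr => (hpf [] hnil r hr List.nil_prefix).symm)]
      exact h
    · have hpcs : pcsSat C t := by cases h with | intro _ _ hp => exact hp
      obtain ⟨t0, ht0⟩ := hpcs _ hmem
      have hsub : ∀ p ∈ c, subAt p t = some t0 := fun p hp => ht0 p hp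
      have hstar : AccN (nstar (Edge.mk s ns C) c) t0 :=
        nstar_accept hne (fun p hp =>
          subE_accept (fun h0 => hnil (h0 ▸ hp)) h (hsub p hp))
      exact foldl_iap_complete c _ h hsub hstar
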